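/- arXiv:math/0603125 — 3 statements merged into one kernel-verified Lean document; each statement's English description precedes it below -/
import Mathlib

section
/- Every element of the centralizer Z_{A_aff}(S) of the scalars S in the affine nilHecke ring, when written in the Frac(S)-basis {w : w ∈ W_aff}, has support contained in the translation subgroup: if a = Σ_{w ∈ W_aff} a_w·w lies in Z_{A_aff}(S) then a_w = 0 whenever w is not a translation element t_λ. -/
/-- If an element `a = Σ_w a_w·w` of the affine nilHecke ring (written in
the `Frac(S)`-basis of group elements `w ∈ W_aff`) centralizes all scalars, then its
support consists of translation elements: `a_w = 0` unless `w = t_λ` for some `λ ∈ Q∨`. -/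
theorem stmt_7
    -- Frac(S), with the W_aff-action on it
    (F : Type*) [Field F]
    -- the finite Weyl group, the coroot lattice, and the affine Weyl group
    (W : Type*) [Group W] [Fintype W]
    (Q : Type*) [AddCommGroup Q]
    (Waff : Type*) [Group Waff]
    (ι : W →* Waff) (hι : Function.Injective ι)
    (t : Q → Waff) (ht_inj : Function.Injective t)
    (ht_add : ∀ q q', t (q + q') = t q * t q')
    -- every element of W_aff factors uniquely as u·t_λ
    (hdecomp : ∀ x : Waff, ∃! p : W × Q, x = ι p.1 * t p.2)
    -- the action of W_aff on the scalars
    (act : Waff → F → F)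
    (hact_one : ∀ s, act 1 s = s)
    (hact_mul : ∀ x y s, act (x * y) s = act x (act y s))
    -- the finite Weyl group acts faithfully on S, and translations act trivially
    (hfaithful : ∀ u : W, (∀ s : F, act (ι u) s = s) → u = 1)
    (htriv : ∀ (q : Q) (s : F), act (t q) s = s)
    -- the nilHecke ring over Frac(S), with the group elements as a basis
    (A : Type*) [Ring A]
    (εF : F →+* A)
    (g : Waff → A)
    (hcomm : ∀ (x : Waff) (s : F), g x * εF s = εF (act x s) * g x)
    (hindep : ∀ c : Waff →₀ F, (c.sum fun x s => εF s * g x) = 0 → c = 0)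
    -- a = Σ a_w · w centralizes the scalars S
    (a : Waff →₀ F)
    (hcent : ∀ s : F,
      (a.sum fun x u => εF u * g x) * εF s = εF s * (a.sum fun x u => εF u * g x)) :
    ∀ x ∈ a.support, ∃ q : Q, x = t q := by
  intro x hx
  obtain ⟨⟨u, q⟩, hxuq, -⟩ := hdecomp x
  refine ⟨q, ?_⟩
  suffices hu : u = 1 by simpa [hu] using hxuq
  apply hfaithful
  intro s
  -- key: act x s = s for all x in the support
  have key : act x s = s := by
    set c : Waff →₀ F := Finsupp.onFinset a.support
      (fun y => a y * (act y s - s))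
      (by intro y hy
          by_contra h
          simp [Finsupp.notMem_support_iff.mp h] at hy) with hc
    have hcsum : (c.sum fun y u => εF u * g y) = 0 := by
      have h0 : ∀ y ∈ a.support, εF (c y) * g y
          = εF (a y) * (g y * εF s) - εF s * (εF (a y) * g y) := by
        intro y _
        rw [hcomm y s]
        simp only [hc, Finsupp.onFinset_apply, map_mul, map_sub]
        have hco : εF (a y) * (εF s * g y) = εF s * (εF (a y) * g y) := by
          rw [← mul_assoc, ← map_mul, mul_comm (a y) s, map_mul, mul_assoc]
        simp only [mul_sub, sub_mul, mul_assoc, hco]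
      have hsub : c.support ⊆ a.support := Finsupp.support_onFinset_subset
      rw [Finsupp.sum_of_support_subset c hsub _ (by intro y _; simp)]
      rw [Finset.sum_congr rfl h0, Finset.sum_sub_distrib]
      have h1 : ∑ y ∈ a.support, εF (a y) * (g y * εF s)
          = (a.sum fun x u => εF u * g x) * εF s := by
        rw [Finsupp.sum, Finset.sum_mul]; simp [mul_assoc]
      have h2 : ∑ y ∈ a.support, εF s * (εF (a y) * g y)
          = εF s * (a.sum fun x u => εF u * g x) := by
        rw [Finsupp.sum, Finset.mul_sum]
      rw [h1, h2, hcent, sub_self]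
    have hc0 := hindep c hcsum
    have : a x * (act x s - s) = 0 := by
      have := DFunLike.congr_fun hc0 x
      simpa [hc] using this
    have hax : a x ≠ 0 := Finsupp.mem_support_iff.mp hx
    have := mul_eq_zero.mp this
    rcases this with h | h
    · exact absurd h hax
    · exact sub_eq_zero.mp h
  -- now use x = ι u * t q
  have : act (ι u) s = s := by
    rw [← htriv q s, ← hact_mul, ← hxuq]
    rw [key, htriv]
  exact this
end

section
/- The affine Fomin–Stanley subspace B' = {a ∈ A_0 : φ_0(a·s) = φ_0(s)·a for all s ∈ S} is closed under multiplication, hence a subalgebra of the affine nilCoxeter algebra. -/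
/-- The constant-term map `φ₀ : Σ c_w A_w ↦ Σ c_w(0) A_w` of the affine nilHecke ring,
expressed via the coefficient map `coeffS` for the `S`-basis `{A_w}` and the evaluation
at zero `π : S → ℤ`. -/
noncomputable def phiZero {S A Waff : Type*} [CommRing S] [Ring A]
    (π : S →+* ℤ) (AW : Waff → A) (coeffS : A → (Waff →₀ S)) (x : A) : A :=
  (coeffS x).sum fun w s => π s • AW w

/-- The affine nilCoxeter algebra `A₀` inside the nilHecke ring: elements whose
`S`-coefficients in the basis `{A_w}` are integers. -/
def nilCoxSet {S A Waff : Type*} [CommRing S] [Ring A]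
    (coeffS : A → (Waff →₀ S)) : Set A :=
  {x : A | ∀ w : Waff, ∃ m : ℤ, coeffS x w = (m : S)}

/-- The affine Fomin–Stanley subspace
`B' = {a ∈ A₀ : φ₀(a·s) = φ₀(s)·a for all s ∈ S}`. -/
def fominStanley {S A Waff : Type*} [CommRing S] [Ring A]
    (π : S →+* ℤ) (ιS : S →+* A) (AW : Waff → A) (coeffS : A → (Waff →₀ S)) : Set A :=
  {x : A | x ∈ nilCoxSet coeffS ∧
    ∀ s : S, phiZero π AW coeffS (x * ιS s) = π s • x}

/-!
Expanding `y * s = Σ_w t_w A_w` in the basis, right multiplication by a basis element `A_w`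
commutes with `φ₀` (a product of basis elements is a basis element or zero), so
`φ₀(x y s) = Σ_w φ₀(x t_w) A_w = x · Σ_w φ₀(t_w) A_w = x · φ₀(y s) = φ₀(s) · x y`.
Integrality is automatic: taking `s = 1` in the defining identity gives `φ₀(a) = a`, so the
coefficients of `a` are constants.
-/

namespace NilHecke

variable {S A W : Type*} [CommRing S] [Ring A]

noncomputable def basisSum (ιS : S →+* A) (AW : W → A) : (W →₀ S) →+ A :=
  Finsupp.liftAddHom fun w => (AddMonoidHom.mulRight (AW w)).comp ιS.toAddMonoidHom

variable {π : S →+* ℤ} {ιS : S →+* A} {AW : W → A} {coeffS : A → W →₀ S}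

theorem basisSum_apply (c : W →₀ S) :
    basisSum ιS AW c = c.sum fun w s => ιS s * AW w := rfl

theorem coeffS_add (hrepr : ∀ x, basisSum ιS AW (coeffS x) = x)
    (hcoeff : ∀ c, coeffS (basisSum ιS AW c) = c) (a b : A) :
    coeffS (a + b) = coeffS a + coeffS b := by
  simpa only [map_add, hrepr] using hcoeff (coeffS a + coeffS b)

theorem coeffS_single (hcoeff : ∀ c, coeffS (basisSum ιS AW c) = c) (w : W) (s : S) :
    coeffS (ιS s * AW w) = Finsupp.single w s := by
  simpa [basisSum_apply] using hcoeff (Finsupp.single w s)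

theorem phiZero_add (hrepr : ∀ x, basisSum ιS AW (coeffS x) = x)
    (hcoeff : ∀ c, coeffS (basisSum ιS AW c) = c) (a b : A) :
    phiZero π AW coeffS (a + b) = phiZero π AW coeffS a + phiZero π AW coeffS b := by
  rw [phiZero, coeffS_add hrepr hcoeff]
  exact Finsupp.sum_add_index' (by simp) fun w s t => by rw [map_add, add_smul]

noncomputable def phiZeroHom (π : S →+* ℤ) (hrepr : ∀ x, basisSum ιS AW (coeffS x) = x)
    (hcoeff : ∀ c, coeffS (basisSum ιS AW c) = c) : A →+ A :=
  AddMonoidHom.mk' (phiZero π AW coeffS) (phiZero_add hrepr hcoeff)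

theorem phiZero_single (hcoeff : ∀ c, coeffS (basisSum ιS AW c) = c) (w : W) (s : S) :
    phiZero π AW coeffS (ιS s * AW w) = π s • AW w := by
  rw [phiZero, coeffS_single hcoeff, Finsupp.sum_single_index (by simp)]

theorem phiZero_mul_basis (hrepr : ∀ x, basisSum ιS AW (coeffS x) = x)
    (hcoeff : ∀ c, coeffS (basisSum ιS AW c) = c)
    (hmul : ∀ v w, AW v * AW w = 0 ∨ ∃ u, AW v * AW w = AW u) (a : A) (w : W) :
    phiZero π AW coeffS (a * AW w) = phiZero π AW coeffS a * AW w := by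
  have hterm : ∀ v s, phiZero π AW coeffS (ιS s * AW v * AW w) = π s • AW v * AW w := by
    intro v s
    rw [mul_assoc, smul_mul_assoc]
    obtain h | ⟨u, h⟩ := hmul v w
    · rw [h, mul_zero, smul_zero]
      exact map_zero (phiZeroHom π hrepr hcoeff)
    · rw [h, phiZero_single hcoeff]
  calc phiZero π AW coeffS (a * AW w)
      = phiZeroHom π hrepr hcoeff ((coeffS a).sum fun v s => ιS s * AW v * AW w) := by
        rw [← Finsupp.sum_mul, ← basisSum_apply, hrepr]; rfl
    _ = (coeffS a).sum fun v s => π s • AW v * AW w := by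
        rw [map_finsuppSum]; exact Finsupp.sum_congr fun v _ => hterm v _
    _ = phiZero π AW coeffS a * AW w := by rw [phiZero, Finsupp.sum_mul]

theorem phiZero_mul_basisSum (hrepr : ∀ x, basisSum ιS AW (coeffS x) = x)
    (hcoeff : ∀ c, coeffS (basisSum ιS AW c) = c)
    (hmul : ∀ v w, AW v * AW w = 0 ∨ ∃ u, AW v * AW w = AW u) (z : A) (c : W →₀ S) :
    phiZero π AW coeffS (z * basisSum ιS AW c) =
      c.sum fun w s => phiZero π AW coeffS (z * ιS s) * AW w := by
  rw [basisSum_apply, Finsupp.mul_sum]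
  refine (map_finsuppSum (phiZeroHom π hrepr hcoeff) _ _).trans (Finsupp.sum_congr fun w _ => ?_)
  rw [← mul_assoc]
  exact phiZero_mul_basis hrepr hcoeff hmul _ w

theorem phiZero_mul_mul_eq_smul (hrepr : ∀ x, basisSum ιS AW (coeffS x) = x)
    (hcoeff : ∀ c, coeffS (basisSum ιS AW c) = c)
    (hmul : ∀ v w, AW v * AW w = 0 ∨ ∃ u, AW v * AW w = AW u) {x y : A}
    (hx : ∀ s, phiZero π AW coeffS (x * ιS s) = π s • x)
    (hy : ∀ s, phiZero π AW coeffS (y * ιS s) = π s • y) (s : S) :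
    phiZero π AW coeffS (x * y * ιS s) = π s • (x * y) := by
  calc phiZero π AW coeffS (x * y * ιS s)
      = phiZero π AW coeffS (x * basisSum ιS AW (coeffS (y * ιS s))) := by
        rw [hrepr, mul_assoc]
    _ = (coeffS (y * ιS s)).sum fun w t => x * (π t • AW w) := by
        rw [phiZero_mul_basisSum hrepr hcoeff hmul]
        exact Finsupp.sum_congr fun w _ => by rw [hx, smul_mul_assoc, mul_smul_comm]
    _ = x * phiZero π AW coeffS (y * ιS s) := by rw [← Finsupp.mul_sum, phiZero]
    _ = π s • (x * y) := by rw [hy, mul_smul_comm]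

theorem mem_nilCoxSet_of_phiZero_eq_self (hcoeff : ∀ c, coeffS (basisSum ιS AW c) = c) {x : A}
    (hx : phiZero π AW coeffS x = x) : x ∈ nilCoxSet coeffS := by
  have hconst : phiZero π AW coeffS x =
      basisSum ιS AW ((coeffS x).mapRange (fun s => ((π s : ℤ) : S)) (by simp)) := by
    rw [basisSum_apply, Finsupp.sum_mapRange_index (by simp), phiZero]
    exact Finsupp.sum_congr fun w _ => by rw [map_intCast, ← zsmul_eq_mul]
  intro w
  refine ⟨π (coeffS x w), ?_⟩
  calc coeffS x w = coeffS (phiZero π AW coeffS x) w := by rw [hx]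
    _ = π (coeffS x w) := by rw [hconst, hcoeff, Finsupp.mapRange_apply]

theorem mem_fominStanley_iff (hcoeff : ∀ c, coeffS (basisSum ιS AW c) = c) {x : A} :
    x ∈ fominStanley π ιS AW coeffS ↔ ∀ s, phiZero π AW coeffS (x * ιS s) = π s • x := by
  refine ⟨And.right, fun hx => ⟨mem_nilCoxSet_of_phiZero_eq_self (π := π) hcoeff ?_, hx⟩⟩
  simpa using hx 1

end NilHecke

theorem stmt_10_general
    (S : Type*) [CommRing S] (π : S →+* ℤ)
    (A : Type*) [Ring A] (ιS : S →+* A)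
    (Waff : Type*) [Group Waff]
    -- the S-basis {A_w} of the affine nilHecke ring
    (AW : Waff → A)
    (coeffS : A → (Waff →₀ S))
    (hrepr : ∀ x : A, ((coeffS x).sum fun w s => ιS s * AW w) = x)
    (hcoeff : ∀ c : Waff →₀ S, coeffS (c.sum fun w s => ιS s * AW w) = c)
    -- products of basis elements of the nilCoxeter algebra
    (hmulAW : ∀ v w : Waff, AW v * AW w = AW (v * w) ∨ AW v * AW w = 0)
    (x y : A)
    (hx : x ∈ fominStanley π ιS AW coeffS)
    (hy : y ∈ fominStanley π ιS AW coeffS) :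
    x * y ∈ fominStanley π ιS AW coeffS := by
  have hmul : ∀ v w, AW v * AW w = 0 ∨ ∃ u, AW v * AW w = AW u := fun v w =>
    (hmulAW v w).symm.imp_right fun h => ⟨v * w, h⟩
  rw [NilHecke.mem_fominStanley_iff hcoeff] at hx hy ⊢
  exact NilHecke.phiZero_mul_mul_eq_smul hrepr hcoeff hmul hx hy

/-- The affine Fomin–Stanley subspace `B'` is closed under
multiplication, hence a subalgebra of the affine nilCoxeter algebra. -/
theorem stmt_10
    (S : Type*) [CommRing S] (π : S →+* ℤ)
    (A : Type*) [Ring A] (ιS : S →+* A)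
    (Waff : Type*) [Group Waff]
    -- the S-basis {A_w} of the affine nilHecke ring
    (AW : Waff → A) (hAW1 : AW 1 = 1)
    (coeffS : A → (Waff →₀ S))
    (hrepr : ∀ x : A, ((coeffS x).sum fun w s => ιS s * AW w) = x)
    (hcoeff : ∀ c : Waff →₀ S, coeffS (c.sum fun w s => ιS s * AW w) = c)
    -- products of basis elements of the nilCoxeter algebra
    (hmulAW : ∀ v w : Waff, AW v * AW w = AW (v * w) ∨ AW v * AW w = 0)
    (x y : A)
    (hx : x ∈ fominStanley π ιS AW coeffS)
    (hy : y ∈ fominStanley π ιS AW coeffS) :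
    x * y ∈ fominStanley π ιS AW coeffS :=
  stmt_10_general S π A ιS Waff AW coeffS hrepr hcoeff hmulAW x y hx hy
end

section
/- In type A_{n−1}, an affine permutation w is cyclically decreasing for a subset A ⊆ ℤ/nℤ with |A| < n if and only if w = s_{a_1}⋯s_{a_k} for a word a_1⋯a_k with distinct letters whose underlying set is A and in which, whenever i and i+1 both lie in A, the letter i+1 precedes i; the resulting w depends only on A and the correspondence A ↦ w is a bijection between proper subsets of ℤ/nℤ and cyclically decreasing affine permutations. -/
/-!
Uniqueness: for a proper nonempty `A` pick `i ∈ A` with `i + 1 ∉ A`. In a cyclically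
decreasing word for `A` the letters in front of `i` are neither `i + 1` (absent) nor `i - 1`
(which comes after `i`), so `s_i` commutes to the front and induction on `A` applies to the rest.

Injectivity: let the group act on `ℤ`, `s_i` exchanging `x` and `x + 1` whenever `x ≡ i (mod n)`.
Peeling off the first letter shows that the element of a cyclically decreasing word with letter
set `A` sends `x + 1` to `x` if `x mod n ∈ A`, and to something `≥ x + 1` otherwise, so `A` can be
read off from the element.
-/

/-- A word with distinct letters in `ℤ/nℤ` is *cyclically decreasing* if whenever `i` and
`i+1` both occur, the letter `i+1` precedes `i`. -/
def IsCycDecWord {n : ℕ} (l : List (ZMod n)) : Prop :=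
  l.Nodup ∧ ∀ i : ZMod n, i ∈ l → i + 1 ∈ l → l.idxOf (i + 1) < l.idxOf i

lemma ZMod.natCast_ne_zero_of_lt {n k : ℕ} (hk : 0 < k) (hkn : k < n) : (k : ZMod n) ≠ 0 := by
  rw [Ne, ZMod.natCast_eq_zero_iff]
  exact Nat.not_dvd_of_pos_of_lt hk hkn

namespace IsCycDecWord

variable {n : ℕ}

lemma nil : IsCycDecWord ([] : List (ZMod n)) := by
  simp [IsCycDecWord]

lemma cons_iff {a : ZMod n} {l : List (ZMod n)} :
    IsCycDecWord (a :: l) ↔ a + 1 ∉ a :: l ∧ a ∉ l ∧ IsCycDecWord l := by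
  constructor
  · rintro ⟨hnd, hord⟩
    obtain ⟨ha, hnd⟩ := List.nodup_cons.mp hnd
    refine ⟨fun h => by simpa using hord a List.mem_cons_self h, ha, hnd, fun i hi hi1 => ?_⟩
    have hia : i ≠ a := fun h => ha (h ▸ hi)
    have hi1a : i + 1 ≠ a := fun h => ha (h ▸ hi1)
    simpa [List.idxOf_cons_ne _ hia.symm, List.idxOf_cons_ne _ hi1a.symm] using
      hord i (List.mem_cons_of_mem a hi) (List.mem_cons_of_mem a hi1)
  · rintro ⟨ha1, ha, hnd, hord⟩
    refine ⟨List.nodup_cons.mpr ⟨ha, hnd⟩, fun i hi hi1 => ?_⟩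
    have hia : i ≠ a := by rintro rfl; exact ha1 hi1
    have hi' : i ∈ l := (List.mem_cons.mp hi).resolve_left hia
    rw [List.idxOf_cons_ne _ hia.symm]
    by_cases hi1a : i + 1 = a
    · rw [hi1a, List.idxOf_cons_self]
      exact Nat.succ_pos _
    · rw [List.idxOf_cons_ne _ (Ne.symm hi1a)]
      exact Nat.succ_lt_succ (hord i hi' ((List.mem_cons.mp hi1).resolve_left hi1a))

lemma sublist {l l' : List (ZMod n)} (hl : IsCycDecWord l) (h : l'.Sublist l) :
    IsCycDecWord l' := by
  induction h with
  | slnil => exact hl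
  | cons a _ ih => exact ih (cons_iff.mp hl).2.2
  | cons_cons a hs ih =>
    obtain ⟨ha1, ha, hl⟩ := cons_iff.mp hl
    exact cons_iff.mpr ⟨fun h => ha1 ((hs.cons_cons a).subset h), fun h => ha (hs.subset h), ih hl⟩

lemma toFinset_erase {l : List (ZMod n)} (hl : IsCycDecWord l) (i : ZMod n) :
    (l.erase i).toFinset = l.toFinset.erase i := by
  ext a
  simp [hl.1.mem_erase_iff]

end IsCycDecWord

section Letters

variable {n : ℕ} [NeZero n]

lemma ZMod.exists_mem_add_one_notMem {I : Finset (ZMod n)} (hne : I.Nonempty)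
    (hI : I ≠ Finset.univ) : ∃ i ∈ I, i + 1 ∉ I := by
  by_contra! h
  obtain ⟨a, ha⟩ := hne
  have hadd : ∀ k : ℕ, a + k ∈ I := by
    intro k
    induction k with
    | zero => simpa using ha
    | succ k ih => simpa [add_assoc] using h _ ih
  refine hI (Finset.eq_univ_of_forall fun b => ?_)
  simpa using hadd (b - a).val

lemma exists_isCycDecWord_toFinset_eq (h1 : (1 : ZMod n) ≠ 0) (I : Finset (ZMod n))
    (hI : I ≠ Finset.univ) : ∃ l : List (ZMod n), IsCycDecWord l ∧ l.toFinset = I := by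
  induction I using Finset.strongInduction with
  | H I ih =>
    obtain rfl | hne := I.eq_empty_or_nonempty
    · exact ⟨[], IsCycDecWord.nil, rfl⟩
    obtain ⟨i, hi, hi1⟩ := ZMod.exists_mem_add_one_notMem hne hI
    obtain ⟨l, hl, hlI⟩ := ih (I.erase i) (Finset.erase_ssubset hi)
      (fun h => Finset.notMem_erase i I (h ▸ Finset.mem_univ i))
    refine ⟨i :: l, IsCycDecWord.cons_iff.mpr ⟨?_, ?_, hl⟩, ?_⟩
    · simp [h1, ← List.mem_toFinset, hlI, hi1]
    · simp [← List.mem_toFinset, hlI]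
    · rw [List.toFinset_cons, hlI, Finset.insert_erase hi]

end Letters

theorem CoxeterSystem.commute_simple_of_eq_two {B W : Type*} [Group W] {M : CoxeterMatrix B}
    (cs : CoxeterSystem M W) {i j : B} (h : M i j = 2) :
    Commute (cs.simple i) (cs.simple j) := by
  have hsq := cs.simple_mul_simple_pow i j
  rw [h, pow_two, mul_eq_one_iff_eq_inv, mul_inv_rev, cs.inv_simple, cs.inv_simple] at hsq
  exact hsq

def CoxeterMatrix.IsAffineA {n : ℕ} (M : CoxeterMatrix (ZMod n)) : Prop :=
  ∀ i j : ZMod n, M i j = if i = j then 1 else if i = j + 1 ∨ j = i + 1 then 3 else 2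

section Coxeter

variable {n : ℕ} {M : CoxeterMatrix (ZMod n)} {W : Type*} [Group W]

theorem CoxeterMatrix.IsAffineA.commute_simple (hM : M.IsAffineA) (cs : CoxeterSystem M W)
    {i j : ZMod n} (hij : i ≠ j) (hj : j ≠ i + 1) (hi : i ≠ j + 1) :
    Commute (cs.simple i) (cs.simple j) :=
  cs.commute_simple_of_eq_two (by rw [hM, if_neg hij, if_neg (by tauto)])

theorem wordProd_eq_simple_mul_wordProd_erase (hM : M.IsAffineA) (cs : CoxeterSystem M W)
    {l : List (ZMod n)} (hl : IsCycDecWord l) {i : ZMod n} (hi : i ∈ l) (hi1 : i + 1 ∉ l) :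
    cs.wordProd l = cs.simple i * cs.wordProd (l.erase i) := by
  induction l with
  | nil => simp at hi
  | cons a t ih =>
    obtain ⟨ha1, ha, ht⟩ := IsCycDecWord.cons_iff.mp hl
    by_cases hai : a = i
    · subst hai
      rw [List.erase_cons_head, cs.wordProd_cons]
    have hit : i ∈ t := (List.mem_cons.mp hi).resolve_left (Ne.symm hai)
    rw [List.erase_cons_tail (by simpa using hai), cs.wordProd_cons, cs.wordProd_cons,
      ih ht hit (fun h => hi1 (List.mem_cons_of_mem a h)), ← mul_assoc, ← mul_assoc,
      (hM.commute_simple cs hai (fun h => ha1 (h ▸ List.mem_cons_of_mem a hit))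
        (fun h => hi1 (h ▸ List.mem_cons_self))).eq]

theorem wordProd_eq_of_toFinset_eq [NeZero n] (hM : M.IsAffineA) (cs : CoxeterSystem M W)
    {I : Finset (ZMod n)} (hI : I ≠ Finset.univ) {l₁ l₂ : List (ZMod n)}
    (h₁ : IsCycDecWord l₁) (h₂ : IsCycDecWord l₂) (hl₁ : l₁.toFinset = I)
    (hl₂ : l₂.toFinset = I) : cs.wordProd l₁ = cs.wordProd l₂ := by
  induction I using Finset.strongInduction generalizing l₁ l₂ with
  | H I ih =>
    obtain rfl | hne := I.eq_empty_or_nonempty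
    · rw [(List.toFinset_eq_empty_iff _).mp hl₁, (List.toFinset_eq_empty_iff _).mp hl₂]
    obtain ⟨i, hi, hi1⟩ := ZMod.exists_mem_add_one_notMem hne hI
    have pull {l : List (ZMod n)} (hl : IsCycDecWord l) (hlI : l.toFinset = I) :=
      wordProd_eq_simple_mul_wordProd_erase hM cs hl (i := i) (by simpa [← hlI] using hi)
        (by simpa [← hlI] using hi1)
    rw [pull h₁ hl₁, pull h₂ hl₂]
    congr 1
    exact ih (I.erase i) (Finset.erase_ssubset hi)
      (fun h => Finset.notMem_erase i I (h ▸ Finset.mem_univ i))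
      (h₁.sublist List.erase_sublist) (h₂.sublist List.erase_sublist)
      (by rw [h₁.toFinset_erase, hl₁]) (by rw [h₂.toFinset_erase, hl₂])

end Coxeter

section Representation

variable {n : ℕ}

def affineSwap (i : ZMod n) (x : ℤ) : ℤ :=
  if (x : ZMod n) = i then x + 1 else if (x : ZMod n) = i + 1 then x - 1 else x

lemma affineSwap_of_eq_add_one (h1 : (1 : ZMod n) ≠ 0) {i : ZMod n} {x : ℤ}
    (h : (x : ZMod n) = i + 1) : affineSwap i x = x - 1 := by
  simp [affineSwap, h, h1]

lemma affineSwap_of_ne {i : ZMod n} {x : ℤ} (h : (x : ZMod n) ≠ i) (h' : (x : ZMod n) ≠ i + 1) :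
    affineSwap i x = x := by
  simp [affineSwap, h, h']

lemma le_affineSwap {i : ZMod n} {x : ℤ} (h : (x : ZMod n) ≠ i + 1) : x ≤ affineSwap i x := by
  unfold affineSwap
  split_ifs <;> omega

lemma sub_one_le_affineSwap (i : ZMod n) (x : ℤ) : x - 1 ≤ affineSwap i x := by
  unfold affineSwap
  split_ifs <;> omega

lemma affineSwap_involutive (h1 : (1 : ZMod n) ≠ 0) (i : ZMod n) :
    Function.Involutive (affineSwap i) := by
  intro x
  obtain hx | hx | hx : (x : ZMod n) = i ∨ (x : ZMod n) = i + 1 ∨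
      ((x : ZMod n) ≠ i ∧ (x : ZMod n) ≠ i + 1) := by tauto
  all_goals simp [affineSwap, hx, h1]

lemma affineSwap_braid (h1 : (1 : ZMod n) ≠ 0) (h2 : (2 : ZMod n) ≠ 0) (i : ZMod n) (x : ℤ) :
    affineSwap i (affineSwap (i + 1) (affineSwap i x)) =
      affineSwap (i + 1) (affineSwap i (affineSwap (i + 1) x)) := by
  have h21 : (2 : ZMod n) ≠ 1 := fun h => h1 (by linear_combination h)
  have h2s : (2 : ZMod n) - 1 = 1 := by ring
  obtain hx | hx | hx | hx : (x : ZMod n) = i ∨ (x : ZMod n) = i + 1 ∨ (x : ZMod n) = i + 2 ∨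
      ((x : ZMod n) ≠ i ∧ (x : ZMod n) ≠ i + 1 ∧ (x : ZMod n) ≠ i + 2) := by tauto
  all_goals simp [affineSwap, hx, h1, h2, h21, h2s, add_assoc, add_sub_assoc, one_add_one_eq_two]

lemma affineSwap_comm (h1 : (1 : ZMod n) ≠ 0) {i j : ZMod n} (hij : i ≠ j) (hj : j ≠ i + 1)
    (hi : i ≠ j + 1) (x : ℤ) : affineSwap i (affineSwap j x) = affineSwap j (affineSwap i x) := by
  obtain hx | hx | hx | hx | hx : (x : ZMod n) = i ∨ (x : ZMod n) = i + 1 ∨ (x : ZMod n) = j ∨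
      (x : ZMod n) = j + 1 ∨
      ((x : ZMod n) ≠ i ∧ (x : ZMod n) ≠ i + 1 ∧ (x : ZMod n) ≠ j ∧ (x : ZMod n) ≠ j + 1) := by
    tauto
  all_goals simp [affineSwap, hx, h1, hij, hj, hi, hij.symm, hj.symm, hi.symm]

def affineSwapPerm (h1 : (1 : ZMod n) ≠ 0) (i : ZMod n) : Equiv.Perm ℤ :=
  (affineSwap_involutive h1 i).toPerm

lemma pow_three_eq_one_of_braid {G : Type*} [Group G] {a b : G} (ha : a * a = 1) (hb : b * b = 1)
    (h : a * b * a = b * a * b) : (a * b) ^ 3 = 1 := by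
  calc (a * b) ^ 3 = (a * b * a) * (b * a * b) := by
        simp only [pow_succ, pow_zero, one_mul, mul_assoc]
    _ = (b * a * b) * (b * a * b) := by rw [h]
    _ = b * (a * (b * b) * a) * b := by simp only [mul_assoc]
    _ = 1 := by rw [hb, mul_one, ha, mul_one, hb]

theorem CoxeterMatrix.IsAffineA.isLiftable {M : CoxeterMatrix (ZMod n)} (hM : M.IsAffineA)
    (h1 : (1 : ZMod n) ≠ 0) (h2 : (2 : ZMod n) ≠ 0) : M.IsLiftable (affineSwapPerm h1) := by
  have sq (i : ZMod n) : affineSwapPerm h1 i * affineSwapPerm h1 i = 1 :=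
    Equiv.ext (affineSwap_involutive h1 i)
  have braid (i : ZMod n) : affineSwapPerm h1 i * affineSwapPerm h1 (i + 1) * affineSwapPerm h1 i =
      affineSwapPerm h1 (i + 1) * affineSwapPerm h1 i * affineSwapPerm h1 (i + 1) :=
    Equiv.ext (affineSwap_braid h1 h2 i)
  intro i j
  rw [hM i j]
  split_ifs with hij hadj
  · rw [hij, pow_one, sq]
  · rcases hadj with rfl | rfl
    · exact pow_three_eq_one_of_braid (sq _) (sq _) (braid j).symm
    · exact pow_three_eq_one_of_braid (sq _) (sq _) (braid i)
  · have hcomm : Commute (affineSwapPerm h1 i) (affineSwapPerm h1 j) :=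
      Equiv.ext (affineSwap_comm h1 hij (by tauto) (by tauto))
    rw [hcomm.mul_pow, pow_two, pow_two, sq, sq, one_mul]

end Representation

section Invariant

variable {n : ℕ}

def IsCycDecAction (I : Finset (ZMod n)) (F : ℤ → ℤ) : Prop :=
  ∀ x : ℤ, ((x : ZMod n) ∈ I → F (x + 1) = x) ∧ ((x : ZMod n) ∉ I → x + 1 ≤ F (x + 1)) ∧
    ((x : ZMod n) ∉ I → (x : ZMod n) + 1 ∉ I → F (x + 1) = x + 1)

lemma isCycDecAction_empty : IsCycDecAction (∅ : Finset (ZMod n)) id := by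
  simp [IsCycDecAction]

lemma IsCycDecAction.affineSwap_comp (h1 : (1 : ZMod n) ≠ 0) {I : Finset (ZMod n)} {i : ZMod n}
    (hi : i ∈ I) (hi1 : i + 1 ∉ I) {F : ℤ → ℤ} (hF : IsCycDecAction (I.erase i) F) :
    IsCycDecAction I (affineSwap i ∘ F) := by
  intro x
  obtain ⟨hdown, hup, hfix⟩ := hF x
  have hcast : ((x + 1 : ℤ) : ZMod n) = (x : ZMod n) + 1 := by push_cast; rfl
  refine ⟨fun hx => ?_, fun hx => ?_, fun hx hx1 => ?_⟩
  · by_cases hxi : (x : ZMod n) = i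
    · rw [Function.comp_apply, hfix (by simp [hxi]) (by simp [hxi, hi1]),
        affineSwap_of_eq_add_one h1 (by rw [hcast, hxi]), add_sub_cancel_right]
    · rw [Function.comp_apply, hdown (Finset.mem_erase.mpr ⟨hxi, hx⟩),
        affineSwap_of_ne hxi (fun h => hi1 (h ▸ hx))]
  · have hxi : (x : ZMod n) ≠ i := fun h => hx (h ▸ hi)
    have hle := hup (fun h => hx (Finset.mem_of_mem_erase h))
    rw [Function.comp_apply]
    rcases hle.lt_or_eq with hlt | heq
    · linarith [sub_one_le_affineSwap i (F (x + 1))]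
    · rw [← heq]
      exact le_affineSwap (by rw [hcast]; exact fun h => hxi (add_right_cancel h))
  · have hxi : (x : ZMod n) ≠ i := fun h => hx (h ▸ hi)
    rw [Function.comp_apply, hfix (fun h => hx (Finset.mem_of_mem_erase h))
      (fun h => hx1 (Finset.mem_of_mem_erase h)),
      affineSwap_of_ne (by rw [hcast]; exact fun h => hx1 (h ▸ hi))
        (by rw [hcast]; exact fun h => hxi (add_right_cancel h))]

end Invariant

section Injectivity

variable {n : ℕ} {M : CoxeterMatrix (ZMod n)} {W : Type*} [Group W]

theorem isCycDecAction_lift_wordProd (hM : M.IsAffineA) (cs : CoxeterSystem M W)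
    (h1 : (1 : ZMod n) ≠ 0) (h2 : (2 : ZMod n) ≠ 0) {l : List (ZMod n)} (hl : IsCycDecWord l) :
    IsCycDecAction l.toFinset
      (cs.lift ⟨affineSwapPerm h1, hM.isLiftable h1 h2⟩ (cs.wordProd l)) := by
  induction l with
  | nil => simpa using isCycDecAction_empty
  | cons a t ih =>
    obtain ⟨ha1, ha, ht⟩ := IsCycDecWord.cons_iff.mp hl
    have hat : t.toFinset = (a :: t).toFinset.erase a := by
      rw [List.toFinset_cons, Finset.erase_insert (by simpa using ha)]
    rw [hat] at ih
    rw [cs.wordProd_cons, map_mul, cs.lift_apply_simple, Equiv.Perm.coe_mul]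
    exact (ih ht).affineSwap_comp h1 (by simp) (by simpa using ha1)

theorem toFinset_eq_of_wordProd_eq (hM : M.IsAffineA) (cs : CoxeterSystem M W)
    (h1 : (1 : ZMod n) ≠ 0) (h2 : (2 : ZMod n) ≠ 0) {l₁ l₂ : List (ZMod n)}
    (h₁ : IsCycDecWord l₁) (h₂ : IsCycDecWord l₂) (h : cs.wordProd l₁ = cs.wordProd l₂) :
    l₁.toFinset = l₂.toFinset := by
  have hF₁ := isCycDecAction_lift_wordProd hM cs h1 h2 h₁
  have hF₂ := isCycDecAction_lift_wordProd hM cs h1 h2 h₂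
  rw [h] at hF₁
  ext i
  obtain ⟨x, rfl⟩ := ZMod.intCast_surjective i
  have mem_iff {I : Finset (ZMod n)} {F : ℤ → ℤ} (hF : IsCycDecAction I F) :
      (x : ZMod n) ∈ I ↔ F (x + 1) = x :=
    ⟨(hF x).1, fun hFx => by_contra fun hx => by linarith [(hF x).2.1 hx]⟩
  rw [mem_iff hF₁, mem_iff hF₂]

end Injectivity

/-- In type `A_{n−1}`: for each proper subset `A ⊆ ℤ/nℤ` there is a
unique affine permutation which is the product `s_{a_1} ⋯ s_{a_k}` along a cyclically
decreasing word with letter set `A` (so the cyclically decreasing element depends only on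
`A`), and the correspondence `A ↦ w` is injective; hence it is a bijection between proper
subsets of `ℤ/nℤ` and cyclically decreasing affine permutations. -/
theorem stmt_13
    (n : ℕ) [NeZero n] (hn : 3 ≤ n)
    -- the affine symmetric group, as the Coxeter group on generators s_i, i ∈ ℤ/nℤ,
    -- with the affine type A Coxeter matrix
    (M : CoxeterMatrix (ZMod n))
    (hM : ∀ i j : ZMod n, M i j =
      if i = j then 1 else if i = j + 1 ∨ j = i + 1 then 3 else 2)
    (Waff : Type*) [Group Waff]
    (cs : CoxeterSystem M Waff) :
    -- well-definedness: A determines w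
    (∀ I : Finset (ZMod n), I ≠ Finset.univ →
      ∃! w : Waff, ∃ l : List (ZMod n),
        IsCycDecWord l ∧ l.toFinset = I ∧ w = cs.wordProd l) ∧
    -- injectivity: distinct proper subsets give distinct cyclically decreasing elements
    (∀ l₁ l₂ : List (ZMod n),
      IsCycDecWord l₁ → l₁.toFinset ≠ Finset.univ →
      IsCycDecWord l₂ → l₂.toFinset ≠ Finset.univ →
      cs.wordProd l₁ = cs.wordProd l₂ → l₁.toFinset = l₂.toFinset) := by
  have h1 : (1 : ZMod n) ≠ 0 := by exact_mod_cast ZMod.natCast_ne_zero_of_lt one_pos (by omega)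
  have h2 : (2 : ZMod n) ≠ 0 := by exact_mod_cast ZMod.natCast_ne_zero_of_lt two_pos (by omega)
  refine ⟨fun I hI => ?_, fun l₁ l₂ h₁ _ h₂ _ h => toFinset_eq_of_wordProd_eq hM cs h1 h2 h₁ h₂ h⟩
  obtain ⟨l, hl, hlI⟩ := exists_isCycDecWord_toFinset_eq h1 I hI
  refine ⟨cs.wordProd l, ⟨l, hl, hlI, rfl⟩, ?_⟩
  rintro _ ⟨l', hl', hl'I, rfl⟩
  exact wordProd_eq_of_toFinset_eq hM cs hI hl' hl hl'I hlI
end
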